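/- arXiv:math/0611217 — 3 statements merged into one kernel-verified Lean document; each statement's English description precedes it below -/
import Mathlib

section
/- Let (f_n) be a sequence of measurable functions on a measurable space X with |f_n| ≤ 1 for all n, converging pointwise to f, and let (μ_n) be probability measures on X converging setwise to a probability measure μ (i.e. μ_n(A) → μ(A) for every measurable A). Then ∫ f_n dμ_n → ∫ f dμ. -/
/-!
Split `∫ fₙ dμₙ = ∫ (fₙ - f) dμₙ + ∫ f dμₙ`. The second term converges because, by the layer-cake
formula, `∫ g dν = ∫₀^C ν{g ≥ s} ds` for `0 ≤ g ≤ C`, and setwise convergence together with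
dominated convergence in `s` applies to the right-hand side. For the first term, Egorov's theorem
for the limit measure `μ` gives a set `t` of small `μ`-measure off which `fₙ → f` uniformly; since
`μₙ(t) → μ(t)`, the set `t` also has small `μₙ`-measure for large `n`.
-/

open MeasureTheory Filter Topology

def TendstoSetwise {X : Type*} [MeasurableSpace X] (μn : ℕ → Measure X) (μ : Measure X) : Prop :=
  ∀ A, MeasurableSet A → Tendsto (fun n => (μn n).real A) atTop (𝓝 (μ.real A))

section

variable {X : Type*} [MeasurableSpace X] {C δ : ℝ}

lemma integrable_of_abs_le {ν : Measure X} [IsFiniteMeasure ν] {g : X → ℝ} (hg : Measurable g)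
    (hb : ∀ x, |g x| ≤ C) : Integrable g ν :=
  .of_bound hg.aestronglyMeasurable C (.of_forall hb)

lemma abs_integral_le_mul_measureReal_add {ν : Measure X} [IsProbabilityMeasure ν]
    {g : X → ℝ} {t : Set X} (hg : Measurable g) (ht : MeasurableSet t) (hδ : 0 ≤ δ)
    (hb : ∀ x, |g x| ≤ C) (hbt : ∀ x ∈ tᶜ, |g x| ≤ δ) :
    |∫ x, g x ∂ν| ≤ C * ν.real t + δ := by
  rw [← integral_add_compl ht (integrable_of_abs_le hg hb)]
  calc |∫ x in t, g x ∂ν + ∫ x in tᶜ, g x ∂ν|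
      ≤ |∫ x in t, g x ∂ν| + |∫ x in tᶜ, g x ∂ν| := abs_add_le _ _
    _ ≤ C * ν.real t + δ * ν.real tᶜ := by
        gcongr
        · exact norm_setIntegral_le_of_norm_le_const (f := g) (measure_lt_top ν t) fun x _ => hb x
        · exact norm_setIntegral_le_of_norm_le_const (f := g) (measure_lt_top ν tᶜ) hbt
    _ ≤ C * ν.real t + δ := by
        gcongr
        exact mul_le_of_le_one_right hδ measureReal_le_one

end

namespace TendstoSetwise

variable {X : Type*} [MeasurableSpace X] {μ : Measure X} {μn : ℕ → Measure X} {C : ℝ}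

theorem tendsto_integral_of_nonneg [IsFiniteMeasure μ] [∀ n, IsProbabilityMeasure (μn n)]
    (hμ : TendstoSetwise μn μ) {g : X → ℝ} (hg : Measurable g) (h0 : ∀ x, 0 ≤ g x)
    (hC : ∀ x, g x ≤ C) :
    Tendsto (fun n => ∫ x, g x ∂(μn n)) atTop (𝓝 (∫ x, g x ∂μ)) := by
  have hgb : ∀ x, |g x| ≤ C := fun x => abs_le.2 ⟨by linarith [h0 x, hC x], hC x⟩
  have layercake : ∀ (ν : Measure X) [IsFiniteMeasure ν],
      ∫ x, g x ∂ν = ∫ t in Set.Ioc 0 C, ν.real {x | t ≤ g x} := fun ν _ =>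
    (integrable_of_abs_le hg hgb).integral_eq_integral_Ioc_meas_le (.of_forall h0) (.of_forall hC)
  simp only [layercake]
  refine tendsto_integral_of_dominated_convergence (fun _ => 1) (fun n => ?_)
    (integrableOn_const measure_Ioc_lt_top.ne) (fun n => .of_forall fun t => ?_)
    (.of_forall fun t => hμ _ (hg measurableSet_Ici))
  · have hanti : Antitone fun t => (μn n).real {x | t ≤ g x} :=
      fun s t hst => measureReal_mono fun x hx => hst.trans hx
    exact hanti.measurable.aestronglyMeasurable
  · rw [Real.norm_eq_abs, abs_of_nonneg measureReal_nonneg]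
    exact measureReal_le_one

theorem tendsto_integral [IsProbabilityMeasure μ] [∀ n, IsProbabilityMeasure (μn n)]
    (hμ : TendstoSetwise μn μ) {g : X → ℝ} (hg : Measurable g) (hb : ∀ x, |g x| ≤ C) :
    Tendsto (fun n => ∫ x, g x ∂(μn n)) atTop (𝓝 (∫ x, g x ∂μ)) := by
  have integral_add_C : ∀ (ν : Measure X) [IsProbabilityMeasure ν],
      ∫ x, (g x + C) ∂ν = ∫ x, g x ∂ν + C := fun ν _ => by
    rw [integral_add (integrable_of_abs_le hg hb) (integrable_const C), integral_const,
      probReal_univ, one_smul]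
  have hshift := hμ.tendsto_integral_of_nonneg (C := C + C) (hg.add_const C)
    (fun x => by linarith [neg_abs_le (g x), hb x])
    (fun x => by linarith [le_abs_self (g x), hb x])
  simp only [integral_add_C] at hshift
  simpa using hshift.sub_const C

theorem tendsto_integral_of_tendsto_zero [IsFiniteMeasure μ] [∀ n, IsProbabilityMeasure (μn n)]
    (hμ : TendstoSetwise μn μ) {g : ℕ → X → ℝ} (hg : ∀ n, Measurable (g n))
    (hb : ∀ n x, |g n x| ≤ C) (h0 : ∀ x, Tendsto (fun n => g n x) atTop (𝓝 0)) :
    Tendsto (fun n => ∫ x, g n x ∂(μn n)) atTop (𝓝 0) := by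
  rw [NormedAddGroup.tendsto_nhds_zero]
  intro ε hε
  obtain ⟨δ, hδ, hδε⟩ := exists_pos_mul_lt hε (2 * |C| + 1)
  obtain ⟨t, ht, hμt, hunif⟩ := tendstoUniformlyOn_of_ae_tendsto' (μ := μ)
    (fun n => (hg n).stronglyMeasurable) stronglyMeasurable_const (.of_forall h0) hδ
  have hμt' : μ.real t ≤ δ := ENNReal.toReal_le_of_le_ofReal hδ.le hμt
  filter_upwards [Metric.tendstoUniformlyOn_iff.1 hunif δ hδ,
    (hμ t ht).eventually (eventually_lt_nhds (lt_add_of_pos_right (μ.real t) hδ))]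
    with n hsmall hμnt
  have hsmall' : ∀ x ∈ tᶜ, |g n x| ≤ δ := fun x hx => by
    simpa [dist_zero_left] using (hsmall x hx).le
  calc ‖∫ x, g n x ∂(μn n)‖
      ≤ C * (μn n).real t + δ :=
        abs_integral_le_mul_measureReal_add (hg n) ht hδ.le (hb n) hsmall'
    _ ≤ |C| * (2 * δ) + δ := by
        gcongr ?_ + δ
        exact mul_le_mul (le_abs_self C) (by linarith) measureReal_nonneg (abs_nonneg C)
    _ = (2 * |C| + 1) * δ := by ring
    _ < ε := hδε

theorem tendsto_integral_of_tendsto [IsProbabilityMeasure μ] [∀ n, IsProbabilityMeasure (μn n)]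
    (hμ : TendstoSetwise μn μ) {f : X → ℝ} {fn : ℕ → X → ℝ} (hmeas : ∀ n, Measurable (fn n))
    (hb : ∀ n x, |fn n x| ≤ C) (hpt : ∀ x, Tendsto (fun n => fn n x) atTop (𝓝 (f x))) :
    Tendsto (fun n => ∫ x, fn n x ∂(μn n)) atTop (𝓝 (∫ x, f x ∂μ)) := by
  have hf : Measurable f := measurable_of_tendsto_metrizable hmeas (tendsto_pi_nhds.2 hpt)
  have hfb : ∀ x, |f x| ≤ C := fun x => le_of_tendsto' (hpt x).abs fun n => hb n x
  have hdiff : Tendsto (fun n => ∫ x, (fn n x - f x) ∂(μn n)) atTop (𝓝 0) :=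
    hμ.tendsto_integral_of_tendsto_zero (fun n => (hmeas n).sub hf)
      (fun n x => (abs_sub _ _).trans (add_le_add (hb n x) (hfb x)))
      fun x => by simpa using (hpt x).sub_const (f x)
  refine (zero_add (∫ x, f x ∂μ) ▸ hdiff.add (hμ.tendsto_integral hf hfb)).congr fun n => ?_
  rw [integral_sub (integrable_of_abs_le (hmeas n) (hb n)) (integrable_of_abs_le hf hfb),
    sub_add_cancel]

end TendstoSetwise

/-- If `|fₙ| ≤ 1`, `fₙ → f` pointwise and the probability measures `μₙ → μ` setwise,
then `∫ fₙ dμₙ → ∫ f dμ`. -/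
theorem stmt1 {X : Type*} [MeasurableSpace X]
    (f : X → ℝ) (fn : ℕ → X → ℝ)
    (μ : Measure X) (μn : ℕ → Measure X)
    [IsProbabilityMeasure μ] [∀ n, IsProbabilityMeasure (μn n)]
    (hmeas : ∀ n, Measurable (fn n))
    (hbdd : ∀ n x, |fn n x| ≤ 1)
    (hpt : ∀ x, Tendsto (fun n => fn n x) atTop (𝓝 (f x)))
    (hset : ∀ A : Set X, MeasurableSet A →
      Tendsto (fun n => (μn n A).toReal) atTop (𝓝 ((μ A).toReal))) :
    Tendsto (fun n => ∫ x, fn n x ∂(μn n)) atTop (𝓝 (∫ x, f x ∂μ)) :=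
  TendstoSetwise.tendsto_integral_of_tendsto hset hmeas hbdd hpt
end

section
/- Let (X_k)_{k≥1} be a process on X with transition kernels K_{k−1} satisfying the uniform minorization K_{k−1}(x, D) ≥ δ for all x and all k, where δ > 0 and D is a fixed measurable set. Then for any ε ∈ (0, δ), E[ n / max(1, Σ_{k=1}^n 1_D(X_k)) ] ≤ 1/(δ−ε) + n·exp(−nε²/2); in particular sup_n E[ n / max(1, Σ_{k=1}^n 1_D(X_k)) ] < ∞. -/
/-!
Split on the event `S_n ≤ n (δ - ε)`, where `S_n = ∑_{k=1}^n 1_D(X_k)`: off it the integrand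
`n / max 1 S_n` is at most `1 / (δ - ε)`, on it at most `n`. The probability of the event is
controlled by a Chernoff bound in place of Azuma's inequality. Convexity of `exp` gives
`e^{-t y} ≤ 1 - (1 - e^{-t}) y` on `[0, 1]`, so conditioning on `𝓕_k` multiplies
`E[e^{-t S_k}]` by at most `1 - δ (1 - e^{-t}) ≤ exp (-δ (1 - e^{-t}))`. With `t = ε`,
`e^{-ε} ≤ 1 - ε + ε²/2` and `δ ≤ 1` the exponent `t n (δ - ε) - n δ (1 - e^{-t})` is at most
`-n ε² / 2`.
-/

open MeasureTheory ProbabilityTheory Real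

namespace Real

lemma exp_neg_le_one_sub_add_sq_div_two {x : ℝ} (hx : 0 ≤ x) :
    exp (-x) ≤ 1 - x + x ^ 2 / 2 := by
  have hderiv (y : ℝ) :
      HasDerivAt (fun y => 1 - y + y ^ 2 / 2 - exp (-y)) (-1 + y + exp (-y)) y := by
    refine ((((hasDerivAt_id y).const_sub 1).add ((hasDerivAt_pow 2 y).div_const 2)).sub
      (hasDerivAt_neg y).exp).congr_deriv ?_
    simp
  have hmono : Monotone fun y : ℝ => 1 - y + y ^ 2 / 2 - exp (-y) :=
    monotone_of_hasDerivAt_nonneg hderiv fun y => by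
      rw [Pi.zero_apply]; linarith [one_sub_le_exp_neg y]
  simpa using hmono hx

lemma exp_neg_mul_le_one_sub_mul {y : ℝ} (hy : y ∈ Set.Icc (0 : ℝ) 1) (t : ℝ) :
    exp (-t * y) ≤ 1 - (1 - exp (-t)) * y := by
  have := convexOn_exp.2 (Set.mem_univ 0) (Set.mem_univ (-t)) (sub_nonneg.2 hy.2) hy.1
    (sub_add_cancel 1 y)
  simp only [smul_eq_mul, mul_zero, zero_add, exp_zero, mul_one] at this
  rw [mul_comm]
  linarith

lemma mul_exp_neg_mul_le {b : ℝ} (hb : 0 < b) (x : ℝ) : x * exp (-x * b) ≤ exp (-1) / b := by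
  rw [le_div_iff₀ hb, neg_mul, mul_right_comm]
  exact mul_exp_neg_le_exp_neg_one _

end Real

lemma div_max_one_le {n s a : ℝ} (hn : 0 ≤ n) (ha : 0 < a) :
    n / max 1 s ≤ 1 / a + if s ≤ n * a then n else 0 := by
  split_ifs with h
  · linarith [div_le_self hn (le_max_left 1 s), one_div_pos.2 ha]
  · rw [add_zero, div_le_div_iff₀ (by positivity) ha, one_mul]
    exact (not_le.1 h).le.trans (le_max_right 1 s)


section

variable {Ω : Type*} {m m0 : MeasurableSpace Ω} {μ : Measure Ω}

lemma integral_mul_eq_integral_mul_condExp [IsFiniteMeasure μ] (hm : m ≤ m0) {Z Y : Ω → ℝ}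
    (hZ : StronglyMeasurable[m] Z) (hZY : Integrable (Z * Y) μ) (hY : Integrable Y μ) :
    ∫ ω, Z ω * Y ω ∂μ = ∫ ω, Z ω * μ[Y | m] ω ∂μ := by
  rw [← integral_condExp hm]
  exact integral_congr_ae (condExp_mul_of_stronglyMeasurable_left hZ hZY hY)

lemma integral_mul_exp_neg_mul_le [IsFiniteMeasure μ] (hm : m ≤ m0) {Z Y : Ω → ℝ} {δ t : ℝ}
    (hZ : Measurable[m] Z) (hZi : Integrable Z μ) (hZ0 : 0 ≤ Z)
    (hY : Measurable Y) (hY01 : ∀ ω, Y ω ∈ Set.Icc 0 1)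
    (hcond : ∀ᵐ ω ∂μ, δ ≤ μ[Y | m] ω) (ht : 0 ≤ t) :
    ∫ ω, Z ω * exp (-t * Y ω) ∂μ ≤ exp (-(δ * (1 - exp (-t)))) * ∫ ω, Z ω ∂μ := by
  set c := 1 - exp (-t)
  have hc : 0 ≤ c := sub_nonneg.2 (exp_le_one_iff.2 (neg_nonpos.2 ht))
  have hY_abs (ω : Ω) : |Y ω| ≤ 1 := abs_le.2 ⟨by linarith [(hY01 ω).1], (hY01 ω).2⟩
  have hYi : Integrable Y μ := .of_mem_Icc 0 1 hY.aemeasurable (ae_of_all _ hY01)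
  have hZY : Integrable (fun ω => Z ω * Y ω) μ :=
    hZi.mul_bdd hY.aestronglyMeasurable (ae_of_all _ hY_abs)
  have hZcond : Integrable (fun ω => Z ω * μ[Y | m] ω) μ :=
    hZi.mul_bdd integrable_condExp.aestronglyMeasurable
      (ae_bdd_abs_condExp_of_ae_bdd_abs (ae_of_all _ hY_abs))
  have hZexp : Integrable (fun ω => Z ω * exp (-t * Y ω)) μ :=
    hZi.mul_bdd (hY.const_mul (-t)).exp.aestronglyMeasurable (c := 1) (ae_of_all _ fun ω => by
      rw [Real.norm_of_nonneg (exp_pos _).le, exp_le_one_iff]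
      nlinarith [mul_nonneg ht (hY01 ω).1])
  calc ∫ ω, Z ω * exp (-t * Y ω) ∂μ
      ≤ ∫ ω, Z ω - c * (Z ω * Y ω) ∂μ := by
        refine integral_mono hZexp (hZi.sub (hZY.const_mul c)) fun ω => ?_
        have := mul_le_mul_of_nonneg_left (exp_neg_mul_le_one_sub_mul (hY01 ω) t) (hZ0 ω)
        dsimp only
        linarith
    _ = ∫ ω, Z ω ∂μ - c * ∫ ω, Z ω * μ[Y | m] ω ∂μ := by
        rw [integral_sub hZi (hZY.const_mul c), integral_const_mul,
          integral_mul_eq_integral_mul_condExp hm hZ.stronglyMeasurable hZY hYi]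
    _ ≤ ∫ ω, Z ω ∂μ - c * (δ * ∫ ω, Z ω ∂μ) := by
        gcongr _ - c * ?_
        rw [← integral_const_mul]
        refine integral_mono_ae (hZi.const_mul δ) hZcond ?_
        filter_upwards [hcond] with ω hω
        rw [mul_comm]
        exact mul_le_mul_of_nonneg_left hω (hZ0 ω)
    _ = (1 - δ * c) * ∫ ω, Z ω ∂μ := by ring
    _ ≤ exp (-(δ * c)) * ∫ ω, Z ω ∂μ := by
        gcongr
        · exact integral_nonneg hZ0
        · exact one_sub_le_exp_neg _

variable [IsProbabilityMeasure μ] {𝒻 : Filtration ℕ m0} {Y : ℕ → Ω → ℝ} {δ : ℝ}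

lemma integral_exp_neg_mul_sum_le (hY : Adapted 𝒻 Y) (hY01 : ∀ k ω, Y k ω ∈ Set.Icc 0 1)
    (hcond : ∀ k, ∀ᵐ ω ∂μ, δ ≤ μ[Y (k + 1) | 𝒻 k] ω) {t : ℝ} (ht : 0 ≤ t) (n : ℕ) :
    ∫ ω, exp (-t * ∑ k ∈ Finset.Icc 1 n, Y k ω) ∂μ ≤ exp (-(n * (δ * (1 - exp (-t))))) := by
  induction n with
  | zero => simp
  | succ n ih =>
    have hS : Measurable[𝒻 n] fun ω => exp (-t * ∑ k ∈ Finset.Icc 1 n, Y k ω) :=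
      ((Finset.measurable_sum _ fun k hk =>
        (hY k).mono (𝒻.mono (Finset.mem_Icc.1 hk).2) le_rfl).const_mul _).exp
    have hSi : Integrable (fun ω => exp (-t * ∑ k ∈ Finset.Icc 1 n, Y k ω)) μ :=
      .of_mem_Icc 0 1 (hS.mono (𝒻.le n) le_rfl).aemeasurable (ae_of_all _ fun ω =>
        ⟨(exp_pos _).le, exp_le_one_iff.2 (by
          nlinarith [Finset.sum_nonneg fun k (_ : k ∈ Finset.Icc 1 n) => (hY01 k ω).1])⟩)
    calc ∫ ω, exp (-t * ∑ k ∈ Finset.Icc 1 (n + 1), Y k ω) ∂μ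
        = ∫ ω, exp (-t * ∑ k ∈ Finset.Icc 1 n, Y k ω) * exp (-t * Y (n + 1) ω) ∂μ := by
          simp_rw [Finset.sum_Icc_succ_top (Nat.le_add_left 1 n), mul_add, exp_add]
      _ ≤ exp (-(δ * (1 - exp (-t)))) * ∫ ω, exp (-t * ∑ k ∈ Finset.Icc 1 n, Y k ω) ∂μ :=
          integral_mul_exp_neg_mul_le (𝒻.le n) hS hSi (fun ω => (exp_pos _).le)
            ((hY _).mono (𝒻.le _) le_rfl) (hY01 _) (hcond n) ht
      _ ≤ exp (-(δ * (1 - exp (-t)))) * exp (-(n * (δ * (1 - exp (-t))))) := by gcongr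
      _ = exp (-((n + 1 : ℕ) * (δ * (1 - exp (-t))))) := by
          rw [← exp_add]; push_cast; ring_nf

lemma measureReal_sum_le_le_exp (hY : Adapted 𝒻 Y) (hY01 : ∀ k ω, Y k ω ∈ Set.Icc 0 1)
    (hcond : ∀ k, ∀ᵐ ω ∂μ, δ ≤ μ[Y (k + 1) | 𝒻 k] ω) (hδ : 0 ≤ δ) {ε : ℝ} (hε : 0 ≤ ε)
    (n : ℕ) :
    μ.real {ω | ∑ k ∈ Finset.Icc 1 n, Y k ω ≤ n * (δ - ε)} ≤ exp (-n * ε ^ 2 / 2) := by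
  have hδ1 : δ ≤ 1 :=
    calc δ = ∫ _, δ ∂μ := by simp
      _ ≤ ∫ ω, μ[Y 1 | 𝒻 0] ω ∂μ := integral_mono_ae (integrable_const _) integrable_condExp
          (hcond 0)
      _ = ∫ ω, Y 1 ω ∂μ := integral_condExp (𝒻.le 0)
      _ ≤ ∫ _, 1 ∂μ := integral_mono_of_nonneg (ae_of_all _ fun ω => (hY01 1 ω).1)
          (integrable_const _) (ae_of_all _ fun ω => (hY01 1 ω).2)
      _ = 1 := by simp
  have hexp_gap : ε - ε ^ 2 / 2 ≤ 1 - exp (-ε) := by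
    linarith [exp_neg_le_one_sub_add_sq_div_two hε]
  have hS : Measurable fun ω => ∑ k ∈ Finset.Icc 1 n, Y k ω :=
    Finset.measurable_sum _ fun k _ => (hY k).mono (𝒻.le k) le_rfl
  have hSi : Integrable (fun ω => exp (-ε * ∑ k ∈ Finset.Icc 1 n, Y k ω)) μ :=
    .of_mem_Icc 0 1 (hS.const_mul _).exp.aemeasurable (ae_of_all _ fun ω =>
      ⟨(exp_pos _).le, exp_le_one_iff.2 (by
        nlinarith [Finset.sum_nonneg fun k (_ : k ∈ Finset.Icc 1 n) => (hY01 k ω).1])⟩)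
  calc μ.real {ω | ∑ k ∈ Finset.Icc 1 n, Y k ω ≤ n * (δ - ε)}
      ≤ exp (ε * (n * (δ - ε))) * mgf (fun ω => ∑ k ∈ Finset.Icc 1 n, Y k ω) μ (-ε) := by
        simpa only [neg_neg] using measure_le_le_exp_mul_mgf _ (neg_nonpos.2 hε) hSi
    _ ≤ exp (ε * (n * (δ - ε))) * exp (-(n * (δ * (1 - exp (-ε))))) := by
        gcongr
        exact integral_exp_neg_mul_sum_le hY hY01 hcond hε n
    _ ≤ exp (-n * ε ^ 2 / 2) := by
        rw [← exp_add, exp_le_exp]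
        have hn : (0 : ℝ) ≤ n := n.cast_nonneg
        nlinarith [mul_le_mul_of_nonneg_left hexp_gap (mul_nonneg hn hδ),
          mul_nonneg (mul_nonneg hn (sq_nonneg ε)) (sub_nonneg.2 hδ1)]

lemma integral_div_max_one_le {S : Ω → ℝ} (hS : Measurable S) {n a : ℝ} (hn : 0 ≤ n)
    (ha : 0 < a) :
    ∫ ω, n / max 1 (S ω) ∂μ ≤ 1 / a + n * μ.real {ω | S ω ≤ n * a} := by
  have hA : MeasurableSet {ω | S ω ≤ n * a} := measurableSet_le hS measurable_const
  have hint : Integrable (fun ω => n / max 1 (S ω)) μ :=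
    .of_mem_Icc 0 n (measurable_const.div (measurable_const.max hS)).aemeasurable
      (ae_of_all _ fun ω => ⟨by positivity, div_le_self hn (le_max_left 1 _)⟩)
  calc ∫ ω, n / max 1 (S ω) ∂μ
      ≤ ∫ ω, 1 / a + {ω | S ω ≤ n * a}.indicator (fun _ => n) ω ∂μ :=
        integral_mono hint ((integrable_const _).add ((integrable_const n).indicator hA))
          fun ω => by simpa [Set.indicator_apply] using div_max_one_le hn ha
    _ = 1 / a + n * μ.real {ω | S ω ≤ n * a} := by
        rw [integral_add (integrable_const _) ((integrable_const n).indicator hA),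
          integral_const, integral_indicator_const _ hA]
        simp [mul_comm]

end

theorem stmt7_general {Ω S : Type*} {m : MeasurableSpace Ω} [MeasurableSpace S]
    {μ : Measure Ω} [IsProbabilityMeasure μ]
    (𝒻 : Filtration ℕ m) (X : ℕ → Ω → S) (hX : ∀ k, Measurable[𝒻 k] (X k))
    (K : ℕ → Kernel S S)
    (hK : ∀ (k : ℕ) (A : Set S), MeasurableSet A →
      (μ[fun ω => Set.indicator A (fun _ => (1 : ℝ)) (X (k + 1) ω) | 𝒻 k]
        =ᵐ[μ] fun ω => ((K k) (X k ω) A).toReal))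
    (D : Set S) (hD : MeasurableSet D)
    (δ : ℝ)
    (hmin : ∀ k x, δ ≤ ((K k) x D).toReal)
    (ε : ℝ) (hε : ε ∈ Set.Ioo 0 δ) :
    (∀ n : ℕ,
      (∫ ω, (n : ℝ) /
          max 1 (∑ k ∈ Finset.Icc 1 n, Set.indicator D (fun _ => (1 : ℝ)) (X k ω)) ∂μ) ≤
        1 / (δ - ε) + (n : ℝ) * Real.exp (-(n : ℝ) * ε ^ 2 / 2)) ∧
    ∃ B : ℝ, ∀ n : ℕ,
      (∫ ω, (n : ℝ) /
          max 1 (∑ k ∈ Finset.Icc 1 n, Set.indicator D (fun _ => (1 : ℝ)) (X k ω)) ∂μ) ≤ B := by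
  obtain ⟨hε, hεδ⟩ := hε
  set Y : ℕ → Ω → ℝ := fun k ω => Set.indicator D (fun _ => (1 : ℝ)) (X k ω)
  have hY : Adapted 𝒻 Y := fun k => (measurable_const.indicator hD).comp (hX k)
  have hY01 (k : ℕ) (ω : Ω) : Y k ω ∈ Set.Icc 0 1 := by
    by_cases h : X k ω ∈ D <;> simp [Y, h]
  have hcond (k : ℕ) : ∀ᵐ ω ∂μ, δ ≤ μ[Y (k + 1) | 𝒻 k] ω :=
    (hK k D hD).mono fun ω hω => hω ▸ hmin k (X k ω)
  have hbound (n : ℕ) : ∫ ω, (n : ℝ) / max 1 (∑ k ∈ Finset.Icc 1 n, Y k ω) ∂μ ≤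
      1 / (δ - ε) + n * exp (-n * ε ^ 2 / 2) := by
    refine (integral_div_max_one_le (Finset.measurable_sum _ fun k _ =>
      (hY k).mono (𝒻.le k) le_rfl) n.cast_nonneg (sub_pos.2 hεδ)).trans ?_
    gcongr
    exact measureReal_sum_le_le_exp hY hY01 hcond (hε.trans hεδ).le hε.le n
  refine ⟨hbound, 1 / (δ - ε) + exp (-1) / (ε ^ 2 / 2), fun n => (hbound n).trans ?_⟩
  rw [mul_div_assoc]
  gcongr
  exact mul_exp_neg_mul_le (by positivity) _

/-- If the chain `(X_k)` has transition kernels satisfying the uniform minorization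
`K_{k}(x, D) ≥ δ`, then for any `ε ∈ (0, δ)`,
`E[n / max(1, ∑_{k=1}^n 1_D(X_k))] ≤ 1/(δ-ε) + n·exp(-nε²/2)`; in particular this
expectation is bounded uniformly in `n`. -/
theorem stmt7 {Ω S : Type*} {m : MeasurableSpace Ω} [MeasurableSpace S]
    {μ : Measure Ω} [IsProbabilityMeasure μ]
    (𝒻 : Filtration ℕ m) (X : ℕ → Ω → S) (hX : ∀ k, Measurable[𝒻 k] (X k))
    (K : ℕ → Kernel S S) [∀ k, IsMarkovKernel (K k)]
    (hK : ∀ (k : ℕ) (A : Set S), MeasurableSet A →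
      (μ[fun ω => Set.indicator A (fun _ => (1 : ℝ)) (X (k + 1) ω) | 𝒻 k]
        =ᵐ[μ] fun ω => ((K k) (X k ω) A).toReal))
    (D : Set S) (hD : MeasurableSet D)
    (δ : ℝ) (hδ : 0 < δ)
    (hmin : ∀ k x, δ ≤ ((K k) x D).toReal)
    (ε : ℝ) (hε : ε ∈ Set.Ioo 0 δ) :
    (∀ n : ℕ,
      (∫ ω, (n : ℝ) /
          max 1 (∑ k ∈ Finset.Icc 1 n, Set.indicator D (fun _ => (1 : ℝ)) (X k ω)) ∂μ) ≤
        1 / (δ - ε) + (n : ℝ) * Real.exp (-(n : ℝ) * ε ^ 2 / 2)) ∧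
    ∃ B : ℝ, ∀ n : ℕ,
      (∫ ω, (n : ℝ) /
          max 1 (∑ k ∈ Finset.Icc 1 n, Set.indicator D (fun _ => (1 : ℝ)) (X k ω)) ∂μ) ≤ B :=
  stmt7_general 𝒻 X hX K hK D hD δ hmin ε hε
end

section
/- A Markov transition kernel P on a measurable space X satisfying the minorization condition P(x,A) ≥ ε ν(A) for all x ∈ X and measurable A (with ε ∈ (0,1] and ν a probability measure) is uniformly geometrically ergodic: it has a unique invariant probability measure π, and ‖P^n − π‖ ≤ 2(1−ε)^n for all n, where ‖·‖ is the uniform operator norm over functions bounded by 1. -/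
/-!
Doeblin splitting: the minorization writes `P = ε ν + R` with a residual kernel `R` of total
mass `1 - ε`. By induction, `μ Pⁿ = ∑_{k<n} ε ν Rᵏ + μ Rⁿ` for every probability measure `μ`, and
the last term has mass `(1 - ε)ⁿ`. Hence `π = ∑_k ε ν Rᵏ` is an invariant probability measure;
`δₓ Pⁿ` and `π = π Pⁿ` share the first `n` terms, so they differ by two measures of mass
`(1 - ε)ⁿ`; and an invariant probability measure dominates every partial sum, hence equals `π`.
-/

open MeasureTheory ProbabilityTheory Filter Topology

noncomputable def iterKer {X : Type*} [MeasurableSpace X] (P : Kernel X X) : ℕ → Kernel X X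
  | 0 => Kernel.id
  | n + 1 => (iterKer P n) ∘ₖ P

open scoped ENNReal
open Set

namespace ProbabilityTheory.Kernel

variable {X Y : Type*} [MeasurableSpace X] [MeasurableSpace Y]

lemma exists_eq_const_add_of_forall_le {κ : Kernel X Y} {μ : Measure Y} [IsFiniteMeasure μ]
    (h : ∀ x, μ ≤ κ x) : ∃ η : Kernel X Y, κ = Kernel.const X μ + η := by
  refine ⟨⟨fun x => κ x - μ, Measure.measurable_of_measurable_coe _ fun s hs => ?_⟩, ?_⟩
  · simp_rw [Measure.sub_apply hs (h _)]
    exact (κ.measurable_coe hs).sub measurable_const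
  · ext1 x
    exact (Measure.sub_add_cancel_of_le (h x)).symm.trans (add_comm _ _)

end ProbabilityTheory.Kernel

section IterKer

variable {X : Type*} [MeasurableSpace X]

instance isMarkovKernel_iterKer (κ : Kernel X X) [IsMarkovKernel κ] (n : ℕ) :
    IsMarkovKernel (iterKer κ n) := by
  induction n with
  | zero => exact inferInstanceAs (IsMarkovKernel Kernel.id)
  | succ n ih => exact inferInstanceAs (IsMarkovKernel (iterKer κ n ∘ₖ κ))

@[simp]
lemma iterKer_zero (κ : Kernel X X) : iterKer κ 0 = Kernel.id := rfl

lemma iterKer_succ' (κ : Kernel X X) (n : ℕ) : iterKer κ (n + 1) = κ ∘ₖ iterKer κ n := by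
  induction n with
  | zero => exact (Kernel.id_comp κ).trans (Kernel.comp_id κ).symm
  | succ n ih => exact (congrArg (· ∘ₖ κ) ih).trans (Kernel.comp_assoc _ _ _)

lemma iterKer_succ_comp (κ : Kernel X X) (n : ℕ) (μ : Measure X) :
    iterKer κ (n + 1) ∘ₘ μ = iterKer κ n ∘ₘ (κ ∘ₘ μ) :=
  Measure.comp_assoc.symm

lemma iterKer_apply_eq_comp_dirac (κ : Kernel X X) (n : ℕ) (x : X) :
    iterKer κ n x = iterKer κ n ∘ₘ Measure.dirac x :=
  (Measure.dirac_bind (iterKer κ n).measurable x).symm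

lemma iterKer_comp_of_comp_eq {κ : Kernel X X} {μ : Measure X} (h : κ ∘ₘ μ = μ) (n : ℕ) :
    iterKer κ n ∘ₘ μ = μ := by
  induction n with
  | zero => exact Measure.id_comp
  | succ n ih => rw [iterKer_succ_comp, h, ih]

lemma comp_apply_univ_of_forall_eq {Y : Type*} [MeasurableSpace Y] {κ : Kernel X Y} {c : ℝ≥0∞}
    (hκ : ∀ x, κ x univ = c) (μ : Measure X) : (κ ∘ₘ μ) univ = c * μ univ := by
  simp [Measure.bind_apply .univ κ.aemeasurable, hκ]

lemma iterKer_comp_apply_univ_of_forall_eq {κ : Kernel X X} {c : ℝ≥0∞} (hκ : ∀ x, κ x univ = c)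
    (n : ℕ) (μ : Measure X) : (iterKer κ n ∘ₘ μ) univ = c ^ n * μ univ := by
  induction n generalizing μ with
  | zero => simp
  | succ n ih => rw [iterKer_succ_comp, ih, comp_apply_univ_of_forall_eq hκ, pow_succ, mul_assoc]

end IterKer

lemma norm_integral_add_sub_integral_add_le {X E : Type*} [MeasurableSpace X]
    [NormedAddCommGroup E] [NormedSpace ℝ E] {S T T' : Measure X}
    [IsFiniteMeasure S] [IsFiniteMeasure T] [IsFiniteMeasure T'] {f : X → E}
    (hf : StronglyMeasurable f) {C : ℝ} (hfC : ∀ x, ‖f x‖ ≤ C) :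
    ‖∫ x, f x ∂(S + T) - ∫ x, f x ∂(S + T')‖ ≤ C * (T.real univ + T'.real univ) := by
  have hint : ∀ μ : Measure X, [IsFiniteMeasure μ] → Integrable f μ :=
    fun μ _ => Integrable.of_bound hf.aestronglyMeasurable C (ae_of_all _ hfC)
  rw [integral_add_measure (hint S) (hint T), integral_add_measure (hint S) (hint T'),
    add_sub_add_left_eq_sub, mul_add]
  exact (norm_sub_le _ _).trans (add_le_add (norm_integral_le_of_norm_le_const (ae_of_all _ hfC))
    (norm_integral_le_of_norm_le_const (ae_of_all _ hfC)))

noncomputable def regenerationMeasure {X : Type*} [MeasurableSpace X] (e : ℝ≥0∞) (ν : Measure X)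
    (R : Kernel X X) : Measure X :=
  Measure.sum fun k => e • (iterKer R k ∘ₘ ν)

section Doeblin

variable {X : Type*} [MeasurableSpace X] {P R : Kernel X X} {ν : Measure X} {e : ℝ≥0∞}

lemma comp_eq_smul_add_comp (hPR : P = Kernel.const X (e • ν) + R) (μ : Measure X) :
    P ∘ₘ μ = μ univ • e • ν + R ∘ₘ μ := by
  rw [hPR, Measure.add_comp, Measure.const_comp]

variable [IsProbabilityMeasure ν]

lemma iterKer_comp_eq_sum_add (hPR : P = Kernel.const X (e • ν) + R)
    (hR : ∀ x, R x univ = 1 - e) (he : e ≤ 1) (n : ℕ) {μ : Measure X} (hμ : μ univ = 1) :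
    iterKer P n ∘ₘ μ = ∑ k ∈ Finset.range n, e • (iterKer R k ∘ₘ ν) + iterKer R n ∘ₘ μ := by
  induction n generalizing μ with
  | zero => simp
  | succ n ih =>
    have hPμ : (e • ν + R ∘ₘ μ) univ = 1 := by
      simp [comp_apply_univ_of_forall_eq hR, hμ, add_tsub_cancel_of_le he]
    rw [iterKer_succ_comp, comp_eq_smul_add_comp hPR, hμ, one_smul, ih hPμ, Measure.comp_add,
      Measure.comp_smul, ← iterKer_succ_comp, Finset.sum_range_succ, add_assoc]

lemma isProbabilityMeasure_regenerationMeasure (hR : ∀ x, R x univ = 1 - e) (he₀ : e ≠ 0)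
    (he : e ≤ 1) : IsProbabilityMeasure (regenerationMeasure e ν R) := by
  constructor
  simp_rw [regenerationMeasure, Measure.sum_apply _ .univ, Measure.smul_apply,
    iterKer_comp_apply_univ_of_forall_eq hR, measure_univ, mul_one, smul_eq_mul]
  rw [ENNReal.tsum_mul_left, ENNReal.tsum_geometric, ENNReal.sub_sub_cancel ENNReal.one_ne_top he,
    ENNReal.mul_inv_cancel he₀ (ne_top_of_le_ne_top ENNReal.one_ne_top he)]

lemma comp_regenerationMeasure (hPR : P = Kernel.const X (e • ν) + R)
    (hR : ∀ x, R x univ = 1 - e) (he₀ : e ≠ 0) (he : e ≤ 1) :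
    P ∘ₘ regenerationMeasure e ν R = regenerationMeasure e ν R := by
  have := isProbabilityMeasure_regenerationMeasure (ν := ν) hR he₀ he
  rw [comp_eq_smul_add_comp hPR, measure_univ, one_smul, regenerationMeasure,
    Measure.bind_sum _ _ R.aemeasurable]
  simp_rw [Measure.comp_smul, Measure.comp_assoc, ← iterKer_succ']
  ext s hs
  rw [Measure.add_apply, Measure.sum_apply _ hs, Measure.sum_apply _ hs]
  conv_rhs => rw [tsum_eq_zero_add' ENNReal.summable, iterKer_zero, Measure.id_comp]

lemma regenerationMeasure_le_of_comp_eq (hPR : P = Kernel.const X (e • ν) + R)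
    (hR : ∀ x, R x univ = 1 - e) (he : e ≤ 1) {μ : Measure X} [IsProbabilityMeasure μ]
    (hμ : P ∘ₘ μ = μ) : regenerationMeasure e ν R ≤ μ := by
  refine Measure.le_intro fun s hs _ => ?_
  rw [regenerationMeasure, Measure.sum_apply _ hs]
  refine ENNReal.tsum_le_of_sum_range_le fun n => ?_
  calc ∑ k ∈ Finset.range n, (e • (iterKer R k ∘ₘ ν)) s
      = (∑ k ∈ Finset.range n, e • (iterKer R k ∘ₘ ν)) s := (Measure.finsetSum_apply _ _ _).symm
    _ ≤ (iterKer P n ∘ₘ μ) s := by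
      rw [iterKer_comp_eq_sum_add hPR hR he n measure_univ]
      exact Measure.le_add_right le_rfl s
    _ = μ s := by rw [iterKer_comp_of_comp_eq hμ]

lemma norm_integral_iterKer_comp_sub_le [IsMarkovKernel P] (hPR : P = Kernel.const X (e • ν) + R)
    (hR : ∀ x, R x univ = 1 - e) (he : e ≤ 1) {μ π : Measure X} [IsProbabilityMeasure μ]
    [IsProbabilityMeasure π] (hπ : P ∘ₘ π = π) {E : Type*} [NormedAddCommGroup E]
    [NormedSpace ℝ E] {f : X → E} (hf : StronglyMeasurable f) {C : ℝ} (hfC : ∀ x, ‖f x‖ ≤ C)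
    (n : ℕ) : ‖∫ x, f x ∂(iterKer P n ∘ₘ μ) - ∫ x, f x ∂π‖ ≤ 2 * C * ((1 - e) ^ n).toReal := by
  have hmass : ∀ ρ : Measure X, [IsProbabilityMeasure ρ] →
      (iterKer R n ∘ₘ ρ).real univ = ((1 - e) ^ n).toReal := fun ρ _ => by
    rw [measureReal_def, iterKer_comp_apply_univ_of_forall_eq hR, measure_univ, mul_one]
  have hμn := iterKer_comp_eq_sum_add hPR hR he n (measure_univ (μ := μ))
  have hπn := iterKer_comp_eq_sum_add hPR hR he n (measure_univ (μ := π))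
  rw [iterKer_comp_of_comp_eq hπ] at hπn
  set S := ∑ k ∈ Finset.range n, e • (iterKer R k ∘ₘ ν)
  have : IsFiniteMeasure S := isFiniteMeasure_of_le _ (hπn.trans_ge (Measure.le_add_right le_rfl))
  have : IsFiniteMeasure (iterKer R n ∘ₘ π) :=
    isFiniteMeasure_of_le _ (hπn.trans_ge (Measure.le_add_left le_rfl))
  have : IsFiniteMeasure (iterKer R n ∘ₘ μ) :=
    isFiniteMeasure_of_le _ (hμn.trans_ge (Measure.le_add_left le_rfl))
  rw [hμn, hπn]
  calc _ ≤ C * ((iterKer R n ∘ₘ μ).real univ + (iterKer R n ∘ₘ π).real univ) :=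
        norm_integral_add_sub_integral_add_le hf hfC
    _ = 2 * C * ((1 - e) ^ n).toReal := by rw [hmass, hmass]; ring

end Doeblin

/-- A Markov kernel satisfying the minorization condition `P(x,A) ≥ ε ν(A)` is uniformly
geometrically ergodic: it has a unique invariant probability measure `π` and
`‖Pⁿ - π‖ ≤ 2(1-ε)ⁿ`. -/
theorem stmt8 {X : Type*} [MeasurableSpace X] (P : Kernel X X) [IsMarkovKernel P]
    (ν : Measure X) [IsProbabilityMeasure ν]
    (ε : ℝ) (hε : 0 < ε) (hε1 : ε ≤ 1)
    (hmin : ∀ (x : X) (A : Set X), MeasurableSet A → ENNReal.ofReal ε * ν A ≤ P x A) :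
    ∃ π : Measure X, IsProbabilityMeasure π ∧ π.bind (fun x => P x) = π ∧
      (∀ (n : ℕ) (f : X → ℝ), Measurable f → (∀ x, |f x| ≤ 1) →
        ∀ x, |(∫ y, f y ∂(iterKer P n x)) - ∫ y, f y ∂π| ≤ 2 * (1 - ε) ^ n) ∧
      (∀ π' : Measure X, IsProbabilityMeasure π' → π'.bind (fun x => P x) = π' → π' = π) := by
  set e := ENNReal.ofReal ε
  have he₀ : e ≠ 0 := (ENNReal.ofReal_pos.2 hε).ne'
  have he : e ≤ 1 := ENNReal.ofReal_le_one.2 hε1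
  have : IsFiniteMeasure (e • ν) := ⟨by simp [e]⟩
  obtain ⟨R, hPR⟩ := Kernel.exists_eq_const_add_of_forall_le (κ := P) (μ := e • ν)
    fun x => Measure.le_intro fun A hA _ => by simpa using hmin x A hA
  have hR : ∀ x, R x univ = 1 - e := fun x => by
    refine ENNReal.eq_sub_of_add_eq ENNReal.ofReal_ne_top ?_
    simpa [hPR, add_comm] using measure_univ (μ := P x)
  have hπ := isProbabilityMeasure_regenerationMeasure (ν := ν) hR he₀ he
  refine ⟨regenerationMeasure e ν R, hπ, comp_regenerationMeasure hPR hR he₀ he,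
    fun n f hf hf1 x => ?_, fun π' _ hπ' => ?_⟩
  · have := norm_integral_iterKer_comp_sub_le hPR hR he (μ := Measure.dirac x)
      (comp_regenerationMeasure hPR hR he₀ he) hf.stronglyMeasurable (C := 1) hf1 n
    rwa [← iterKer_apply_eq_comp_dirac, Real.norm_eq_abs, mul_one, ENNReal.toReal_pow,
      ENNReal.toReal_sub_of_le he ENNReal.one_ne_top, ENNReal.toReal_one,
      ENNReal.toReal_ofReal hε.le] at this
  · exact (Measure.eq_of_le_of_isProbabilityMeasure
      (regenerationMeasure_le_of_comp_eq hPR hR he hπ')).symm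
end
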